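/- Let A be a normal N×N complex matrix with 0 < ‖A‖ < 1 and let B be a nonzero positive semidefinite N×N matrix. Define S(T) = ∑_{k=0}^{T} A^k B (A†)^k for an integer T ≥ 0 and S(∞) = ∑_{k=0}^{∞} A^k B (A†)^k. Then (1/2)·‖ S(∞)/tr(S(∞)) − S(T)/tr(S(T)) ‖₁ ≤ ‖A‖^{2(T+1)}. -/

import Mathlib

/-!
The tail `S(∞) - S(T)` is `A^(T+1) S(∞) (A^(T+1))ᴴ`, whose trace is at most
`‖A‖^(2(T+1)) tr S(∞)`. For `0 ≤ X ≤ Y`, the difference `D` of the trace normalizations of `Y`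
and `X` is dominated by `P = (Y - X) / tr Y`, and `P - D` is a nonnegative multiple of `X`;
in an eigenbasis of the traceless Hermitian `D` this gives `‖D‖₁ ≤ 2 tr P`.
-/

open scoped Matrix.Norms.L2Operator ComplexOrder
open Matrix

/-- The trace norm (sum of singular values) of a square complex matrix,
realized as `tr √(Mᴴ M)`. -/
noncomputable def traceNorm {n : ℕ} (M : Matrix (Fin n) (Fin n) ℂ) : ℝ :=
  (((Matrix.posSemidef_conjTranspose_mul_self M).1.eigenvectorUnitary : Matrix (Fin n) (Fin n) ℂ) *
    diagonal (((↑) : ℝ → ℂ) ∘ (√·) ∘ (Matrix.posSemidef_conjTranspose_mul_self M).1.eigenvalues) *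
    (star (Matrix.posSemidef_conjTranspose_mul_self M).1.eigenvectorUnitary : Matrix (Fin n) (Fin n) ℂ)).trace.re

open scoped MatrixOrder

lemma traceNorm_eq_re_trace_cfc_sqrt {n : ℕ} (M : Matrix (Fin n) (Fin n) ℂ) :
    traceNorm M = (cfc Real.sqrt (Mᴴ * M)).trace.re := by
  rw [(posSemidef_conjTranspose_mul_self M).1.cfc_eq]
  rfl

lemma Matrix.IsHermitian.trace_cfc {𝕜 ι : Type*} [RCLike 𝕜] [Fintype ι] [DecidableEq ι]
    {A : Matrix ι ι 𝕜} (hA : A.IsHermitian) (f : ℝ → ℝ) :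
    (cfc f A).trace = ∑ i, (f (hA.eigenvalues i) : 𝕜) := by
  rw [hA.cfc_eq, IsHermitian.cfc, Unitary.conjStarAlgAut_apply, trace_mul_cycle,
    Unitary.coe_star_mul_self, Matrix.one_mul, trace_diagonal]
  rfl

lemma Matrix.IsHermitian.traceNorm_eq_sum_abs_eigenvalues {n : ℕ}
    {D : Matrix (Fin n) (Fin n) ℂ} (hD : D.IsHermitian) :
    traceNorm D = ∑ i, |hD.eigenvalues i| := by
  have hsq : Dᴴ * D = cfc (fun x : ℝ => x ^ 2) D := by
    rw [hD.eq, cfc_pow_id D 2 hD.isSelfAdjoint, sq]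
  rw [traceNorm_eq_re_trace_cfc_sqrt, hsq, ← cfc_comp' Real.sqrt (fun x : ℝ => x ^ 2) D,
    hD.trace_cfc]
  simp [Real.sqrt_sq_eq_abs]

/-- In an eigenbasis of `D`, the diagonal entries `q i` of `P` satisfy `q i ≥ 0` and
`q i ≥ μ i`, hence `|μ i| ≤ 2 q i - μ i`. -/
lemma Matrix.IsHermitian.sum_abs_eigenvalues_le {𝕜 ι : Type*} [RCLike 𝕜] [Fintype ι]
    [DecidableEq ι] {D P : Matrix ι ι 𝕜} (hD : D.IsHermitian) (hP : P.PosSemidef)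
    (hPD : (P - D).PosSemidef) :
    ∑ i, |hD.eigenvalues i| ≤ 2 * RCLike.re P.trace - RCLike.re D.trace := by
  set U : Matrix ι ι 𝕜 := (hD.eigenvectorUnitary : Matrix ι ι 𝕜)
  set μ := hD.eigenvalues
  have hdiag : star U * D * U = diagonal (RCLike.ofReal ∘ μ) := by
    simpa [Unitary.conjStarAlgAut_star_apply] using hD.conjStarAlgAut_star_eigenvectorUnitary
  set Q := star U * P * U
  have hQ : Q.PosSemidef := hP.conjTranspose_mul_mul_same U
  have hQμ : (Q - diagonal (RCLike.ofReal ∘ μ)).PosSemidef := by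
    have := hPD.conjTranspose_mul_mul_same U
    rwa [Matrix.mul_sub, Matrix.sub_mul, ← star_eq_conjTranspose, hdiag] at this
  have hentry (i : ι) : |μ i| ≤ 2 * RCLike.re (Q i i) - μ i := by
    have h₀ := (RCLike.nonneg_iff.mp (hQ.diag_nonneg (i := i))).1
    have h₁ := (RCLike.nonneg_iff.mp (hQμ.diag_nonneg (i := i))).1
    simp only [sub_apply, diagonal_apply_eq, Function.comp_apply, map_sub,
      RCLike.ofReal_re] at h₁
    rw [abs_le]
    constructor <;> linarith
  have htrQ : Q.trace = P.trace := by
    rw [trace_mul_cycle, Unitary.mul_star_self_of_mem hD.eigenvectorUnitary.2, Matrix.one_mul]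
  calc ∑ i, |μ i| ≤ ∑ i, (2 * RCLike.re (Q i i) - μ i) := Finset.sum_le_sum fun i _ => hentry i
    _ = 2 * RCLike.re P.trace - RCLike.re D.trace := by
        rw [Finset.sum_sub_distrib, ← Finset.mul_sum, ← htrQ, hD.trace_eq_sum_eigenvalues, trace]
        simp [μ]

section TraceOrder

variable {ι : Type*} [Fintype ι]

lemma Matrix.PosSemidef.ofReal_re_trace {A : Matrix ι ι ℂ} (hA : A.PosSemidef) :
    (A.trace.re : ℂ) = A.trace :=
  (Complex.eq_re_of_ofReal_le (r := 0) (by simpa using hA.trace_nonneg)).symm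

lemma Matrix.PosSemidef.re_trace_nonneg {A : Matrix ι ι ℂ} (hA : A.PosSemidef) :
    0 ≤ A.trace.re :=
  (Complex.le_def.mp hA.trace_nonneg).1

lemma Matrix.re_trace_mono {X Y : Matrix ι ι ℂ} (h : X ≤ Y) : X.trace.re ≤ Y.trace.re := by
  have := (Matrix.le_iff.mp h).re_trace_nonneg
  rwa [trace_sub, Complex.sub_re, sub_nonneg] at this

lemma Matrix.PosSemidef.re_trace_pos {A : Matrix ι ι ℂ} (hA : A.PosSemidef) (hA0 : A ≠ 0) :
    0 < A.trace.re := by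
  refine hA.re_trace_nonneg.lt_of_ne fun h => hA0 ?_
  rw [← hA.trace_eq_zero_iff, ← hA.ofReal_re_trace, ← h, Complex.ofReal_zero]

variable [DecidableEq ι]

/-- `M S Mᴴ` has the same trace as `√S (Mᴴ M) √S ≤ ‖M‖² S`. -/
lemma Matrix.re_trace_mul_mul_conjTranspose_le (M : Matrix ι ι ℂ) {S : Matrix ι ι ℂ}
    (hS : S.PosSemidef) : (M * S * Mᴴ).trace.re ≤ ‖M‖ ^ 2 * S.trace.re := by
  set r := CFC.sqrt S
  have hr : star r = r := (CFC.sqrt_nonneg S).isSelfAdjoint.star_eq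
  have hS' : S = r * r := (CFC.sqrt_mul_sqrt_self S hS.nonneg).symm
  have key := star_left_conjugate_le_conjugate
    (CStarAlgebra.star_mul_le_algebraMap_norm_sq (a := M)) r
  rw [hr] at key
  calc (M * S * Mᴴ).trace.re = (r * (star M * M) * r).trace.re := by
        rw [hS', show M * (r * r) * Mᴴ = (M * r) * (r * Mᴴ) by simp only [Matrix.mul_assoc],
          trace_mul_comm]
        simp only [star_eq_conjTranspose, Matrix.mul_assoc]
    _ ≤ (r * algebraMap ℝ _ (‖M‖ ^ 2) * r).trace.re := Matrix.re_trace_mono key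
    _ = ‖M‖ ^ 2 * S.trace.re := by
        rw [Algebra.algebraMap_eq_smul_one, Matrix.mul_smul, Matrix.mul_one, Matrix.smul_mul,
          ← hS', trace_smul, Complex.smul_re, smul_eq_mul]

end TraceOrder

lemma half_traceNorm_normalize_sub_normalize_le {n : ℕ} {X Y : Matrix (Fin n) (Fin n) ℂ}
    (hX : X.PosSemidef) (hXY : (Y - X).PosSemidef) (hX0 : 0 < X.trace.re) :
    (1/2) * traceNorm (Y.trace⁻¹ • Y - X.trace⁻¹ • X) ≤ (Y - X).trace.re / Y.trace.re := by
  have hY : Y.PosSemidef := by simpa using hX.add hXY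
  set s := Y.trace.re
  set t := X.trace.re
  have hts : t ≤ s := Matrix.re_trace_mono (Matrix.le_iff.mpr hXY)
  have hs0 : 0 < s := hX0.trans_le hts
  set D := s⁻¹ • Y - t⁻¹ • X
  set P := s⁻¹ • (Y - X)
  have hnormalize : Y.trace⁻¹ • Y - X.trace⁻¹ • X = D := by
    rw [← hY.ofReal_re_trace, ← hX.ofReal_re_trace, ← Complex.ofReal_inv, ← Complex.ofReal_inv,
      Complex.coe_smul, Complex.coe_smul]
  have hD : D.IsHermitian :=
    (hY.smul (inv_nonneg.mpr hs0.le)).1.sub (hX.smul (inv_nonneg.mpr hX0.le)).1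
  have hP : P.PosSemidef := hXY.smul (inv_nonneg.mpr hs0.le)
  have hPD : (P - D).PosSemidef := by
    have : P - D = (t⁻¹ - s⁻¹) • X := by simp only [P, D]; module
    rw [this]
    exact hX.smul (sub_nonneg.mpr (inv_anti₀ hX0 hts))
  have htrD : D.trace.re = 0 := by
    simp only [D, trace_sub, trace_smul, Complex.sub_re, Complex.smul_re, smul_eq_mul]
    rw [inv_mul_cancel₀ hs0.ne', inv_mul_cancel₀ hX0.ne', sub_self]
  have htrP : P.trace.re = (Y - X).trace.re / s := by
    simp only [P, trace_smul, Complex.smul_re, smul_eq_mul, inv_mul_eq_div]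
  have := hD.sum_abs_eigenvalues_le hP hPD
  simp only [RCLike.re_to_complex, htrD, htrP, sub_zero] at this
  rw [hnormalize, hD.traceNorm_eq_sum_abs_eigenvalues]
  linarith

lemma HasSum.sub_sum_range_eq_pow_mul_mul_pow {R : Type*} [Ring R] [TopologicalSpace R]
    [IsTopologicalRing R] [T2Space R] {a b c S : R}
    (hS : HasSum (fun k : ℕ => a ^ k * b * c ^ k) S) (m : ℕ) :
    S - ∑ k ∈ Finset.range m, a ^ k * b * c ^ k = a ^ m * S * c ^ m := by
  have hshift : (fun k => a ^ (k + m) * b * c ^ (k + m)) =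
      fun k => a ^ m * (a ^ k * b * c ^ k) * c ^ m := by
    funext k
    rw [pow_add, pow_add, pow_mul_comm a k m]
    simp only [mul_assoc]
  have htail := (hasSum_nat_add_iff' m).mpr hS
  rw [hshift] at htail
  exact htail.unique ((hS.mul_left (a ^ m)).mul_right (c ^ m))

theorem discrete_lyapunov_truncation_bound_general {n : ℕ} (A B Sinf : Matrix (Fin n) (Fin n) ℂ)
    (hB : B.PosSemidef) (hB0 : B ≠ 0)
    (hS : HasSum (fun k : ℕ => A ^ k * B * Aᴴ ^ k) Sinf) (T : ℕ) :
    (1/2) * traceNorm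
      (Sinf.trace⁻¹ • Sinf -
        (∑ k ∈ Finset.range (T+1), A ^ k * B * Aᴴ ^ k).trace⁻¹ •
          (∑ k ∈ Finset.range (T+1), A ^ k * B * Aᴴ ^ k)) ≤ ‖A‖ ^ (2*(T+1)) := by
  set f := fun k : ℕ => A ^ k * B * Aᴴ ^ k
  set ST := ∑ k ∈ Finset.range (T+1), f k
  have hf (k : ℕ) : (f k).PosSemidef := by
    simpa [f, conjTranspose_pow] using hB.mul_mul_conjTranspose_same (A ^ k)
  have hSinf : Sinf.PosSemidef := nonneg_iff_posSemidef.mp (hS.nonneg fun k => (hf k).nonneg)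
  have htail : Sinf - ST = A ^ (T+1) * Sinf * (A ^ (T+1))ᴴ := by
    rw [hS.sub_sum_range_eq_pow_mul_mul_pow, conjTranspose_pow]
  have hST0 : 0 < ST.trace.re := calc
    0 < B.trace.re := hB.re_trace_pos hB0
    _ = (f 0).trace.re := by simp [f]
    _ ≤ ∑ k ∈ Finset.range (T+1), (f k).trace.re :=
      Finset.single_le_sum (fun k _ => (hf k).re_trace_nonneg) (Finset.mem_range.mpr T.succ_pos)
    _ = ST.trace.re := by simp only [ST, trace_sum, Complex.re_sum]
  have hgap : (Sinf - ST).PosSemidef := htail ▸ hSinf.mul_mul_conjTranspose_same _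
  have hs0 : 0 < Sinf.trace.re := hST0.trans_le (Matrix.re_trace_mono (Matrix.le_iff.mpr hgap))
  calc (1/2) * traceNorm (Sinf.trace⁻¹ • Sinf - ST.trace⁻¹ • ST)
      ≤ (Sinf - ST).trace.re / Sinf.trace.re :=
        half_traceNorm_normalize_sub_normalize_le (posSemidef_sum _ fun k _ => hf k) hgap hST0
    _ ≤ ‖A ^ (T+1)‖ ^ 2 := by
        rw [div_le_iff₀ hs0, htail]
        exact (A ^ (T+1)).re_trace_mul_mul_conjTranspose_le hSinf
    _ ≤ ‖A‖ ^ (2*(T+1)) := by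
        rw [mul_comm, pow_mul]
        exact pow_le_pow_left₀ (norm_nonneg _) (norm_pow_le' A T.succ_pos) 2

/-- Truncation error bound for the discrete-time Lyapunov series. -/
theorem discrete_lyapunov_truncation_bound {n : ℕ} (A B Sinf : Matrix (Fin n) (Fin n) ℂ)
    (hA0 : 0 < ‖A‖) (hA1 : ‖A‖ < 1) (hnormal : A * Aᴴ = Aᴴ * A)
    (hB : B.PosSemidef) (hB0 : B ≠ 0)
    (hS : HasSum (fun k : ℕ => A ^ k * B * Aᴴ ^ k) Sinf) (T : ℕ) :
    (1/2) * traceNorm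
      (Sinf.trace⁻¹ • Sinf -
        (∑ k ∈ Finset.range (T+1), A ^ k * B * Aᴴ ^ k).trace⁻¹ •
          (∑ k ∈ Finset.range (T+1), A ^ k * B * Aᴴ ^ k)) ≤ ‖A‖ ^ (2*(T+1)) :=
  discrete_lyapunov_truncation_bound_general A B Sinf hB hB0 hS T
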